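/- arXiv:2203.11929 — 2 statements merged into one kernel-verified Lean document; each statement's English description precedes it below -/
import Mathlib

section
/- Let (F,Ω,⋆) be a stratified fusion system on a group S, let Γ be an F-closed set of subgroups of S such that F is Γ-inductive, and let V ∈ Γ. Then there exists an F-conjugate U of V such that both U and Soc(N_F(U)) are fully normalized in (F,Ω,⋆), where Soc(N_F(U)) denotes the largest subgroup of N_S(U) that is normal in the fusion system N_F(U). -/
/-- `F f X Y` asserts that the function `f : S → S` (through its restriction to `X`)
is an `F`-homomorphism from the subgroup `X` to the subgroup `Y`. -/
abbrev HomPred (S : Type*) [Group S] := (S → S) → Subgroup S → Subgroup S → Prop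

/-- A fusion system, with hom-sets given by `F · X Y`, on the subgroup `T`
of the ambient group `S`.  Morphisms are represented by functions `S → S`,
two functions agreeing on `X` representing the same morphism `X → Y`. -/
structure IsFusionSystem {S : Type*} [Group S] (T : Subgroup S) (F : HomPred S) : Prop where
  le_base : ∀ f X Y, F f X Y → X ≤ T ∧ Y ≤ T
  mapsTo : ∀ f X Y, F f X Y → Set.MapsTo f (X : Set S) (Y : Set S)
  injOn : ∀ f X Y, F f X Y → Set.InjOn f (X : Set S)
  map_mul' : ∀ f X Y, F f X Y → ∀ x ∈ X, ∀ y ∈ X, f (x * y) = f x * f y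
  of_eqOn : ∀ f g X Y, F f X Y → Set.EqOn g f (X : Set S) → F g X Y
  conj_mem : ∀ g ∈ T, ∀ X Y : Subgroup S, X ≤ T → Y ≤ T →
    (∀ x ∈ X, g⁻¹ * x * g ∈ Y) → F (fun x => g⁻¹ * x * g) X Y
  comp_mem : ∀ f g X Y Z, F f X Y → F g Y Z → F (g ∘ f) X Z
  restrict_mem : ∀ f X Y X₀ Y₀, F f X Y → X₀ ≤ X → Y₀ ≤ Y →
    Set.MapsTo f (X₀ : Set S) (Y₀ : Set S) → F f X₀ Y₀
  corestrict_mem : ∀ f X Y, F f X Y → F f X (Subgroup.closure (f '' (X : Set S)))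
  inv_mem : ∀ f X Y, F f X Y →
    ∃ g, F g (Subgroup.closure (f '' (X : Set S))) X ∧ ∀ x ∈ X, g (f x) = x

variable {S : Type*} [Group S]

/-- `f` is an `F`-isomorphism from `X` onto `Y`. -/
def IsFIso (F : HomPred S) (f : S → S) (X Y : Subgroup S) : Prop :=
  F f X Y ∧ f '' (X : Set S) = (Y : Set S)

/-- `X^F`, the set of `F`-conjugates of `X`. -/
def FConj (F : HomPred S) (X : Subgroup S) : Set (Subgroup S) :=
  {Y | ∃ f, IsFIso F f X Y}

/-- `N` is normal in the fusion system `F` on the base subgroup `T`: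
`N` is normal in `T` and every `F`-isomorphism `X → Y` extends to an
`F`-isomorphism `XN → YN` mapping `N` onto `N`. -/
def NormalInF (T : Subgroup S) (F : HomPred S) (N : Subgroup S) : Prop :=
  N ≤ T ∧ (∀ g ∈ T, ∀ n ∈ N, g⁻¹ * n * g ∈ N) ∧
    ∀ f X Y, IsFIso F f X Y →
      ∃ g, IsFIso F g (X ⊔ N) (Y ⊔ N) ∧ Set.EqOn g f (X : Set S) ∧
        g '' (N : Set S) = (N : Set S)

/-- The supremum of the lengths of strictly increasing chains in `Ω`
terminating in `A`. -/
noncomputable def dimEnd (Ω : Set (Subgroup S)) (A : Subgroup S) : ℕ :=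
  sSup {n | ∃ c : Fin (n + 1) → Subgroup S,
    StrictMono c ∧ (∀ i, c i ∈ Ω) ∧ c (Fin.last n) = A}

/-- The supremum of the lengths of strictly increasing chains in `Ω`. -/
noncomputable def dimOmega (Ω : Set (Subgroup S)) : ℕ :=
  sSup {n | ∃ c : Fin (n + 1) → Subgroup S, StrictMono c ∧ ∀ i, c i ∈ Ω}

/-- `(Ω, star)` is a stratification on the fusion system `F` on base `T`. -/
structure IsStratification (T : Subgroup S) (F : HomPred S)
    (Ω : Set (Subgroup S)) (star : Subgroup S → Subgroup S) : Prop where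
  omega_le : ∀ A ∈ Ω, A ≤ T
  star_mem : ∀ X : Subgroup S, X ≤ T → star X ∈ Ω
  star_fix : ∀ A ∈ Ω, star A = A
  star_mono : ∀ X Y : Subgroup S, X ≤ T → Y ≤ T → X ≤ Y → star X ≤ star Y
  finDim : ∃ N : ℕ, ∀ n : ℕ,
    (∃ c : Fin (n + 1) → Subgroup S, StrictMono c ∧ ∀ i, c i ∈ Ω) → n ≤ N
  conj_invariant : ∀ A ∈ Ω, ∀ f Y, IsFIso F f A Y → Y ∈ Ω
  le_star : ∀ X : Subgroup S, X ≤ T → X ≤ star X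
  extend_star : ∀ f X Y, IsFIso F f X Y →
    ∃ g, IsFIso F g (star X) (star Y) ∧ Set.EqOn g f (X : Set S)

/-- `dim_Ω(X)`, the supremum of the lengths of strictly increasing chains
in `Ω` terminating in `X⋆`. -/
noncomputable def dimStar (Ω : Set (Subgroup S)) (star : Subgroup S → Subgroup S)
    (X : Subgroup S) : ℕ :=
  dimEnd Ω (star X)

/-- `V` is fully normalized in the stratified fusion system `(F, Ω, star)` on base `T`. -/
def FullyNormalizedIn (T : Subgroup S) (F : HomPred S) (Ω : Set (Subgroup S))
    (star : Subgroup S → Subgroup S) (V : Subgroup S) : Prop :=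
  ∀ U ∈ FConj F V, dimStar Ω star (Subgroup.normalizer (U : Set S) ⊓ T) ≤ dimStar Ω star (Subgroup.normalizer (V : Set S) ⊓ T)

/-- `V` is fully centralized in the stratified fusion system `(F, Ω, star)` on base `T`. -/
def FullyCentralizedIn (T : Subgroup S) (F : HomPred S) (Ω : Set (Subgroup S))
    (star : Subgroup S → Subgroup S) (V : Subgroup S) : Prop :=
  ∀ U ∈ FConj F V,
    dimStar Ω star ((Subgroup.centralizer (U : Set S) ⊓ T) ⊔ U) ≤
      dimStar Ω star ((Subgroup.centralizer (V : Set S) ⊓ T) ⊔ V)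

/-- `Γ` is an `F`-closed set of subgroups. -/
def FClosed (F : HomPred S) (Γ : Set (Subgroup S)) : Prop :=
  Γ.Nonempty ∧ (∀ X ∈ Γ, ∀ Y ∈ FConj F X, Y ∈ Γ) ∧
    ∀ X ∈ Γ, ∀ Y : Subgroup S, X ≤ Y → Y ∈ Γ

/-- `Y` is normalizer-inductive in the fusion system `F` on base `T`. -/
def NormalizerInductive (T : Subgroup S) (F : HomPred S) (Y : Subgroup S) : Prop :=
  ∀ X ∈ FConj F Y, ∃ φ, F φ (Subgroup.normalizer (X : Set S) ⊓ T) (Subgroup.normalizer (Y : Set S) ⊓ T) ∧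
    φ '' (X : Set S) = (Y : Set S)

/-- `Y` is centralizer-inductive in the fusion system `F` on base `T`. -/
def CentralizerInductive (T : Subgroup S) (F : HomPred S) (Y : Subgroup S) : Prop :=
  ∀ X ∈ FConj F Y, ∃ ψ,
    F ψ ((Subgroup.centralizer (X : Set S) ⊓ T) ⊔ X)
        ((Subgroup.centralizer (Y : Set S) ⊓ T) ⊔ Y) ∧
    ψ '' (X : Set S) = (Y : Set S)

/-- `F` is `Γ`-inductive. -/
def GammaInductive (T : Subgroup S) (F : HomPred S) (Γ : Set (Subgroup S)) : Prop :=
  ∀ X ∈ Γ, ∃ Y ∈ FConj F X, NormalizerInductive T F Y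

/-- `F` is inductive (i.e. `Sub(T)`-inductive). -/
def InductiveFS (T : Subgroup S) (F : HomPred S) : Prop :=
  ∀ X : Subgroup S, X ≤ T → ∃ Y ∈ FConj F X, NormalizerInductive T F Y

/-- `⟨Φ⟩_T`: the smallest fusion system on `T` all of whose homomorphisms are
`Famb`-homomorphisms and whose hom-sets contain `Φ`. -/
def GenFS (T : Subgroup S) (Famb : HomPred S) (Φ : HomPred S) : HomPred S :=
  fun f X Y => ∀ E : HomPred S, IsFusionSystem T E →
    (∀ g A B, E g A B → Famb g A B) → (∀ g A B, Φ g A B → E g A B) → E f X Y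

/-- The generating set `Φ` for `N_F(V)`: `F`-isomorphisms between subgroups of
`N_S(V)` extending to `F`-isomorphisms `XV → YV` restricting to an automorphism of `V`. -/
def NPhi (F : HomPred S) (V : Subgroup S) : HomPred S :=
  fun f X Y => X ≤ Subgroup.normalizer (V : Set S) ∧ Y ≤ Subgroup.normalizer (V : Set S) ∧ IsFIso F f X Y ∧
    ∃ g, IsFIso F g (X ⊔ V) (Y ⊔ V) ∧ Set.EqOn g f (X : Set S) ∧
      g '' (V : Set S) = (V : Set S)

/-- The fusion system `N_F(V)` on `N_S(V)`. -/
def NFus (F : HomPred S) (V : Subgroup S) : HomPred S :=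
  GenFS (Subgroup.normalizer (V : Set S)) F (NPhi F V)

/-- The generating set `Ψ` for `C_F(V)`: `F`-isomorphisms between subgroups of
`C_S(V)` extending to `F`-isomorphisms `XV → YV` restricting to the identity on `V`. -/
def CPsi (F : HomPred S) (V : Subgroup S) : HomPred S :=
  fun f X Y => X ≤ Subgroup.centralizer (V : Set S) ∧
    Y ≤ Subgroup.centralizer (V : Set S) ∧ IsFIso F f X Y ∧
    ∃ g, IsFIso F g (X ⊔ V) (Y ⊔ V) ∧ Set.EqOn g f (X : Set S) ∧ ∀ v ∈ V, g v = v

/-- The fusion system `C_F(V)` on `C_S(V)`. -/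
def CFus (F : HomPred S) (V : Subgroup S) : HomPred S :=
  GenFS (Subgroup.centralizer (V : Set S)) F (CPsi F V)

/-- `X ↦ X• = (VX)⋆ ⊓ N_S(V)`. -/
def bulletStar (star : Subgroup S → Subgroup S) (V : Subgroup S) :
    Subgroup S → Subgroup S :=
  fun X => star (V ⊔ X) ⊓ Subgroup.normalizer (V : Set S)

/-- `N_Ω(V) = {X• : X ≤ N_S(V)}`. -/
def bulletOmega (star : Subgroup S → Subgroup S) (V : Subgroup S) : Set (Subgroup S) :=
  {A | ∃ X : Subgroup S, X ≤ Subgroup.normalizer (V : Set S) ∧ A = bulletStar star V X}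

/-- `A ↦ A° = (VA)⋆ ⊓ C_S(V)`. -/
def circStar (star : Subgroup S → Subgroup S) (V : Subgroup S) :
    Subgroup S → Subgroup S :=
  fun A => star (V ⊔ A) ⊓ Subgroup.centralizer (V : Set S)

/-- `C_Ω(V) = {A° : A ≤ C_S(V)}`. -/
def circOmega (star : Subgroup S → Subgroup S) (V : Subgroup S) : Set (Subgroup S) :=
  {A | ∃ X : Subgroup S, X ≤ Subgroup.centralizer (V : Set S) ∧ A = circStar star V X}

/-- `T` is strongly closed in `F`. -/
def StronglyClosedF (F : HomPred S) (T : Subgroup S) : Prop :=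
  ∀ X : Subgroup S, X ≤ T → ∀ Y ∈ FConj F X, Y ≤ T


/-!
Let `Y` be a normalizer-inductive conjugate of `V` and `M = Soc(N_F(Y))`, which exists because
`Ω` is finite-dimensional. Since `Y ≤ M ∈ Γ`, `M` has a normalizer-inductive conjugate `P`,
realised by some `φ : N_S(M) → N_S(P)`; take `U = φ(Y)`. The maps `φ : N_S(Y) → N_S(U)` and
`N_S(U) → N_S(Y)` (from the inductivity of `Y`) carry normal subgroups of `N_F(Y)` and `N_F(U)`
to each other, so `Soc(N_F(U)) = φ(M) = P`. Both `U` and `P` receive `F`-homomorphisms from the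
normalizers of all their conjugates, and `dim_Ω` cannot drop along an `F`-homomorphism, so both
are fully normalized.
-/

open Set

local notation "N_S(" W ")" => Subgroup.normalizer ((W : Subgroup S) : Set S)

def IsMulOn (f : S → S) (D : Subgroup S) : Prop :=
  ∀ x ∈ D, ∀ y ∈ D, f (x * y) = f x * f y

/-- Morphisms are functions `S → S`, so images are formed as generated subgroups; on a domain
where `f` is multiplicative this is just `f '' A` (`IsMulOn.coe_homImage`). -/
def homImage (f : S → S) (A : Subgroup S) : Subgroup S := Subgroup.closure (f '' A)

section HomImage

variable {f g : S → S} {A B C D : Subgroup S} {x : S}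

theorem mem_homImage (hx : x ∈ A) : f x ∈ homImage f A :=
  Subgroup.subset_closure (mem_image_of_mem f hx)

theorem homImage_mono (h : A ≤ B) : homImage f A ≤ homImage f B :=
  Subgroup.closure_mono (image_mono h)

theorem homImage_le_iff : homImage f A ≤ C ↔ MapsTo f A C := by
  rw [homImage, Subgroup.closure_le, image_subset_iff]
  rfl

theorem homImage_eq_of_image_eq (h : f '' A = B) : homImage f A = B := by
  rw [homImage, h, Subgroup.closure_eq]

theorem homImage_congr (h : EqOn g f A) : homImage g A = homImage f A := by
  rw [homImage, homImage, h.image_eq]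

namespace IsMulOn

variable (hf : IsMulOn f D)
include hf

theorem map_one : f 1 = 1 := by
  simpa using hf 1 D.one_mem 1 D.one_mem

theorem map_inv (hx : x ∈ D) : f x⁻¹ = (f x)⁻¹ :=
  eq_inv_of_mul_eq_one_left (by rw [← hf _ (inv_mem hx) _ hx, inv_mul_cancel, hf.map_one])

def preimage (C : Subgroup S) : Subgroup S where
  carrier := {x | x ∈ D ∧ f x ∈ C}
  one_mem' := ⟨D.one_mem, by rw [hf.map_one]; exact C.one_mem⟩
  mul_mem' := fun {x y} hx hy =>
    ⟨mul_mem hx.1 hy.1, by rw [hf x hx.1 y hy.1]; exact mul_mem hx.2 hy.2⟩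
  inv_mem' := fun {x} hx => ⟨inv_mem hx.1, by rw [hf.map_inv hx.1]; exact inv_mem hx.2⟩

theorem mapsTo_sup (hA : A ≤ D) (hB : B ≤ D) (hAC : MapsTo f A C) (hBC : MapsTo f B C) :
    MapsTo f (A ⊔ B : Subgroup S) C := fun _ hx =>
  (sup_le (fun _ ha => ⟨hA ha, hAC ha⟩) (fun _ hb => ⟨hB hb, hBC hb⟩) :
    A ⊔ B ≤ hf.preimage C) hx |>.2

theorem coe_homImage (hA : A ≤ D) : (homImage f A : Set S) = f '' A := by
  let H : Subgroup S :=
    { carrier := f '' A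
      one_mem' := ⟨1, A.one_mem, hf.map_one⟩
      mul_mem' := by
        rintro _ _ ⟨a, ha, rfl⟩ ⟨b, hb, rfl⟩
        exact ⟨a * b, mul_mem ha hb, hf a (hA ha) b (hA hb)⟩
      inv_mem' := by
        rintro _ ⟨a, ha, rfl⟩
        exact ⟨a⁻¹, inv_mem ha, hf.map_inv (hA ha)⟩ }
  exact congrArg SetLike.coe (Subgroup.closure_eq H)

theorem homImage_sup (hA : A ≤ D) (hB : B ≤ D) :
    homImage f (A ⊔ B) = homImage f A ⊔ homImage f B := by
  refine le_antisymm (homImage_le_iff.mpr (hf.mapsTo_sup hA hB ?_ ?_))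
    (sup_le (homImage_mono le_sup_left) (homImage_mono le_sup_right))
  · exact fun a ha => (le_sup_left : homImage f A ≤ _) (mem_homImage ha)
  · exact fun b hb => (le_sup_right : homImage f B ≤ _) (mem_homImage hb)

theorem mem_normalizer_homImage (hA : A ≤ D) (hx : x ∈ D)
    (hxA : x ∈ N_S(A)) :
    f x ∈ N_S(homImage f A) := by
  rw [Subgroup.mem_normalizer_iff'']
  intro b
  simp only [← SetLike.mem_coe, hf.coe_homImage hA]
  constructor
  · rintro ⟨a, ha, rfl⟩
    refine ⟨x⁻¹ * a * x, (Subgroup.mem_normalizer_iff''.mp hxA a).mp ha, ?_⟩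
    rw [hf _ (mul_mem (inv_mem hx) (hA ha)) x hx, hf _ (inv_mem hx) a (hA ha), hf.map_inv hx]
  · rintro ⟨a, ha, hab⟩
    refine ⟨x * a * x⁻¹, (Subgroup.mem_normalizer_iff.mp hxA a).mp ha, ?_⟩
    rw [hf _ (mul_mem hx (hA ha)) _ (inv_mem hx), hf x hx a (hA ha), hf.map_inv hx, hab]
    group

end IsMulOn

end HomImage

theorem forall_conj_mem_iff_le_normalizer {T N : Subgroup S} :
    (∀ g ∈ T, ∀ n ∈ N, g⁻¹ * n * g ∈ N) ↔ T ≤ N_S(N) := by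
  refine ⟨fun h g hg => Subgroup.mem_normalizer_iff''.mpr fun n => ⟨h g hg n, fun hn => ?_⟩,
    fun h g hg n hn => (Subgroup.mem_normalizer_iff''.mp (h hg) n).mp hn⟩
  simpa [mul_assoc] using h g⁻¹ (inv_mem hg) _ hn

theorem conj_image_eq_of_mem_normalizer {W : Subgroup S} {c : S}
    (hc : c ∈ N_S(W)) : (fun x => c⁻¹ * x * c) '' W = W := by
  ext y
  constructor
  · rintro ⟨w, hw, rfl⟩
    exact (Subgroup.mem_normalizer_iff''.mp hc w).mp hw
  · exact fun hy => ⟨c * y * c⁻¹, (Subgroup.mem_normalizer_iff.mp hc y).mp hy, by group⟩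

namespace IsFusionSystem

variable {T : Subgroup S} {F : HomPred S} (hF : IsFusionSystem T F)
  {f g : S → S} {A B X Y Z : Subgroup S}
include hF

theorem isMulOn (hf : F f X Y) : IsMulOn f X := hF.map_mul' f X Y hf

theorem hom_of_mapsTo (hf : F f X Y) (hA : A ≤ X) (hB : B ≤ T) (hAB : MapsTo f A B) :
    F f A B := by
  have hres : F f A (Y ⊓ B) :=
    hF.restrict_mem f X Y A _ hf hA inf_le_left fun a ha => ⟨hF.mapsTo f X Y hf (hA ha), hAB ha⟩
  have hincl : F (fun x => 1⁻¹ * x * 1) (Y ⊓ B) B :=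
    hF.conj_mem 1 T.one_mem _ _ (inf_le_left.trans (hF.le_base f X Y hf).2) hB
      fun _ hx => by simpa using hx.2
  exact hF.of_eqOn _ f A B (hF.comp_mem _ _ _ _ _ hres hincl) fun _ _ => by simp

theorem coe_homImage (hf : F f X Y) (hA : A ≤ X) : (homImage f A : Set S) = f '' A :=
  (hF.isMulOn hf).coe_homImage hA

theorem homImage_le (hf : F f X Y) (hA : A ≤ X) : homImage f A ≤ Y :=
  homImage_le_iff.mpr fun _ ha => hF.mapsTo f X Y hf (hA ha)

theorem isFIso_homImage (hf : F f X Y) (hA : A ≤ X) : IsFIso F f A (homImage f A) :=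
  ⟨hF.hom_of_mapsTo hf hA ((hF.homImage_le hf hA).trans (hF.le_base f X Y hf).2)
    fun _ ha => mem_homImage ha, (hF.coe_homImage hf hA).symm⟩

theorem isFIso_comp (hf : IsFIso F f X Y) (hg : IsFIso F g Y Z) : IsFIso F (g ∘ f) X Z :=
  ⟨hF.comp_mem f g X Y Z hf.1 hg.1, by rw [image_comp, hf.2, hg.2]⟩

theorem exists_inv (hf : IsFIso F f X Y) : ∃ g, IsFIso F g Y X ∧ InvOn g f X Y := by
  obtain ⟨g, hg, hgf⟩ := hF.inv_mem f X Y hf.1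
  rw [hf.2, Subgroup.closure_eq] at hg
  have hright : RightInvOn g f Y := by
    rw [← hf.2]
    rintro _ ⟨x, hx, rfl⟩
    rw [hgf x hx]
  have hinv : InvOn g f X Y := ⟨hgf, hright⟩
  refine ⟨g, ⟨hg, ?_⟩, hinv⟩
  exact (InvOn.bijOn hinv.symm (hF.mapsTo g Y X hg) (hf.2 ▸ mapsTo_image f X)).image_eq

theorem fConj_symm (h : Y ∈ FConj F X) : X ∈ FConj F Y :=
  let ⟨_, hf⟩ := h
  let ⟨g, hg, _⟩ := hF.exists_inv hf
  ⟨g, hg⟩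

theorem fConj_trans (hXY : Y ∈ FConj F X) (hYZ : Z ∈ FConj F Y) : Z ∈ FConj F X :=
  let ⟨f, hf⟩ := hXY
  let ⟨g, hg⟩ := hYZ
  ⟨g ∘ f, hF.isFIso_comp hf hg⟩

theorem homImage_le_homImage_iff (hf : F f X Y) (hA : A ≤ X) (hB : B ≤ X) :
    homImage f A ≤ homImage f B ↔ A ≤ B := by
  rw [← SetLike.coe_subset_coe, hF.coe_homImage hf hA, hF.coe_homImage hf hB,
    (hF.injOn f X Y hf).image_subset_image_iff hA hB, SetLike.coe_subset_coe]

theorem homImage_lt_homImage (hf : F f X Y) (hB : B ≤ X) (hAB : A < B) :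
    homImage f A < homImage f B := by
  rw [lt_iff_le_not_ge, hF.homImage_le_homImage_iff hf (hAB.le.trans hB) hB,
    hF.homImage_le_homImage_iff hf hB (hAB.le.trans hB)]
  exact lt_iff_le_not_ge.mp hAB

theorem homImage_homImage (hg : F g X Y) (hA : A ≤ X) :
    homImage f (homImage g A) = homImage (f ∘ g) A := by
  rw [homImage, hF.coe_homImage hg hA, ← image_comp, homImage]

theorem homImage_homImage_of_leftInvOn (hg : F g X Y) (hinv : LeftInvOn f g X) (hA : A ≤ X) :
    homImage f (homImage g A) = A := by
  have hid : EqOn (f ∘ g) id A := fun _ ha => hinv (hA ha)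
  rw [hF.homImage_homImage hg hA, homImage_congr hid, homImage, image_id, Subgroup.closure_eq]

theorem homImage_inf (hf : F f X Y) (hA : A ≤ X) (hB : B ≤ X) :
    homImage f (A ⊓ B) = homImage f A ⊓ homImage f B :=
  SetLike.coe_injective (by
    rw [Subgroup.coe_inf, hF.coe_homImage hf (inf_le_left.trans hA), hF.coe_homImage hf hA,
      hF.coe_homImage hf hB, Subgroup.coe_inf, (hF.injOn f X Y hf).image_inter hA hB])

section Transport

variable {β βb : S → S} {D D' : Subgroup S} (hβ : IsFIso F β D D') (hβb : IsFIso F βb D' D)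
  (hinv : InvOn βb β D D')
include hβ hβb hinv

theorem hom_transport (hf : F f A B) (hA : A ≤ D) (hB : B ≤ D) :
    F (β ∘ f ∘ βb) (homImage β A) (homImage β B) := by
  have hβbA : F βb (homImage β A) A := by
    refine hF.hom_of_mapsTo hβb.1 (hF.homImage_le hβ.1 hA)
      (hA.trans (hF.le_base β D D' hβ.1).1) ?_
    rw [hF.coe_homImage hβ.1 hA]
    exact (hinv.1.mono hA).mapsTo (surjOn_image β A)
  exact hF.comp_mem _ _ _ _ _ (hF.comp_mem _ _ _ _ _ hβbA hf) (hF.isFIso_homImage hβ.1 hB).1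

theorem isFIso_transport (hf : IsFIso F f A B) (hA : A ≤ D) (hB : B ≤ D) :
    IsFIso F (β ∘ f ∘ βb) (homImage β A) (homImage β B) :=
  ⟨hF.hom_transport hβ hβb hinv hf.1 hA hB, by
    rw [hF.coe_homImage hβ.1 hA, hF.coe_homImage hβ.1 hB, image_comp, image_comp,
      hinv.1.image_image' hA, hf.2]⟩

end Transport

end IsFusionSystem

namespace IsStratification

variable {F : HomPred S} {Ω : Set (Subgroup S)} {star : Subgroup S → Subgroup S}
  (hΩ : IsStratification ⊤ F Ω star) {f : S → S} {A B D D' K K' X Y : Subgroup S}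
include hΩ

theorem bddAbove_chainLengths (A : Subgroup S) : BddAbove {n | ∃ c : Fin (n + 1) → Subgroup S,
    StrictMono c ∧ (∀ i, c i ∈ Ω) ∧ c (Fin.last n) = A} :=
  let ⟨N, hN⟩ := hΩ.finDim
  ⟨N, fun n ⟨c, hc, hcΩ, _⟩ => hN n ⟨c, hc, hcΩ⟩⟩

theorem exists_dimEnd_le : ∃ n, ∀ A, dimEnd Ω A ≤ n :=
  let ⟨n, hn⟩ := hΩ.finDim
  ⟨n, fun _ => csSup_le' fun m ⟨c, hc, hcΩ, _⟩ => hn m ⟨c, hc, hcΩ⟩⟩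

theorem le_dimEnd {n : ℕ} {c : Fin (n + 1) → Subgroup S} (hc : StrictMono c)
    (hcΩ : ∀ i, c i ∈ Ω) : n ≤ dimEnd Ω (c (Fin.last n)) :=
  le_csSup (hΩ.bddAbove_chainLengths _) ⟨c, hc, hcΩ, rfl⟩

theorem exists_chain_dimEnd (hA : A ∈ Ω) : ∃ c : Fin (dimEnd Ω A + 1) → Subgroup S,
    StrictMono c ∧ (∀ i, c i ∈ Ω) ∧ c (Fin.last _) = A := by
  refine Nat.sSup_mem ?_ (hΩ.bddAbove_chainLengths A)
  exact ⟨0, fun _ => A, Fin.strictMono_iff_lt_succ.mpr finZeroElim, fun _ => hA, rfl⟩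

theorem dimEnd_lt_dimEnd (hA : A ∈ Ω) (hB : B ∈ Ω) (hAB : A < B) :
    dimEnd Ω A < dimEnd Ω B := by
  obtain ⟨c, hc, hcΩ, hlast⟩ := hΩ.exists_chain_dimEnd hA
  have hsnoc := Fin.strictMono_insertNth_last hc B (hlast.symm ▸ hAB)
  rw [Fin.insertNth_last'] at hsnoc
  have := hΩ.le_dimEnd hsnoc (Fin.lastCases (by simpa using hB) (by simpa using hcΩ))
  rw [Fin.snoc_last] at this
  exact Nat.lt_of_succ_le this

theorem dimEnd_mono (hA : A ∈ Ω) (hB : B ∈ Ω) (hAB : A ≤ B) :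
    dimEnd Ω A ≤ dimEnd Ω B := by
  rcases hAB.lt_or_eq with h | rfl
  exacts [(hΩ.dimEnd_lt_dimEnd hA hB h).le, le_rfl]

theorem star_le (hA : A ∈ Ω) (hXA : X ≤ A) : star X ≤ A :=
  hΩ.star_fix A hA ▸ hΩ.star_mono X A le_top le_top hXA

theorem dimStar_mono (hXY : X ≤ Y) : dimStar Ω star X ≤ dimStar Ω star Y :=
  hΩ.dimEnd_mono (hΩ.star_mem X le_top) (hΩ.star_mem Y le_top)
    (hΩ.star_mono X Y le_top le_top hXY)

theorem le_star_of_dimStar_le (hXY : X ≤ Y) (hd : dimStar Ω star Y ≤ dimStar Ω star X) :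
    Y ≤ star X := by
  have hle := hΩ.star_mono X Y le_top le_top hXY
  obtain hlt | heq := hle.lt_or_eq
  · exact absurd hd (not_le.mpr
      (hΩ.dimEnd_lt_dimEnd (hΩ.star_mem X le_top) (hΩ.star_mem Y le_top) hlt))
  · exact heq ▸ hΩ.le_star Y le_top

variable (hF : IsFusionSystem ⊤ F)
include hF

theorem homImage_mem (hf : F f D D') (hA : A ≤ D) (hAΩ : A ∈ Ω) : homImage f A ∈ Ω :=
  hΩ.conj_invariant A hAΩ f _ (hF.isFIso_homImage hf hA)

theorem dimEnd_le_of_isFIso (h : IsFIso F f D D') (hD : D ∈ Ω) :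
    dimEnd Ω D ≤ dimEnd Ω D' := by
  obtain ⟨c, hc, hcΩ, hlast⟩ := hΩ.exists_chain_dimEnd hD
  have hcD : ∀ i, c i ≤ D := fun i => hlast ▸ hc.monotone (Fin.le_last i)
  have := hΩ.le_dimEnd (c := fun i => homImage f (c i))
    (fun i j hij => hF.homImage_lt_homImage h.1 (hcD j) (hc hij))
    (fun i => hΩ.homImage_mem hF h.1 (hcD i) (hcΩ i))
  rwa [hlast, homImage_eq_of_image_eq h.2] at this

theorem dimStar_eq_of_isFIso (h : IsFIso F f X Y) : dimStar Ω star X = dimStar Ω star Y := by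
  obtain ⟨g, hg, -⟩ := hΩ.extend_star f X Y h
  obtain ⟨g', hg', -⟩ := hF.exists_inv hg
  exact le_antisymm (hΩ.dimEnd_le_of_isFIso hF hg (hΩ.star_mem X le_top))
    (hΩ.dimEnd_le_of_isFIso hF hg' (hΩ.star_mem Y le_top))

theorem dimStar_le_of_hom (hf : F f X Y) : dimStar Ω star X ≤ dimStar Ω star Y :=
  (hΩ.dimStar_eq_of_isFIso hF (hF.isFIso_homImage hf le_rfl)).trans_le
    (hΩ.dimStar_mono (hF.homImage_le hf le_rfl))

theorem star_le_homImage_star (hf : F f D D') (hK : star K ≤ D) (hK' : K' ≤ homImage f K) :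
    star K' ≤ homImage f (star K) :=
  hΩ.star_le (hΩ.homImage_mem hF hf hK (hΩ.star_mem K le_top))
    (hK'.trans (homImage_mono (hΩ.le_star K le_top)))

theorem homImage_star (h : IsFIso F f D D') (hK : star K ≤ D) (hK' : star K' ≤ D')
    (hKK' : homImage f K = K') : homImage f (star K) = star K' := by
  obtain ⟨g, hg, hinv⟩ := hF.exists_inv h
  have hKD : K ≤ D := (hΩ.le_star K le_top).trans hK
  refine le_antisymm ?_ (hΩ.star_le_homImage_star hF h.1 hK hKK'.ge)
  have hK'K : homImage g K' = K := hKK' ▸ hF.homImage_homImage_of_leftInvOn h.1 hinv.1 hKD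
  calc homImage f (star K) ≤ homImage f (homImage g (star K')) :=
        homImage_mono (hΩ.star_le_homImage_star hF hg.1 hK' hK'K.ge)
    _ = star K' := hF.homImage_homImage_of_leftInvOn hg.1 hinv.2 hK'

end IsStratification

/-- The explicit description of `N_F(W)`, see `IsFusionSystem.nFus_eq`. -/
def NExt (F : HomPred S) (W : Subgroup S) : HomPred S :=
  fun f A B => A ≤ N_S(W) ∧ B ≤ N_S(W) ∧
    F f A B ∧ ∃ g, F g (A ⊔ W) (B ⊔ W) ∧ EqOn g f A ∧ g '' W = W

namespace IsFusionSystem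

variable {F : HomPred S} (hF : IsFusionSystem ⊤ F) {f g β βb : S → S}
  {A B C D D' M X Y W W' : Subgroup S}
include hF

theorem conj_mem_top (c : S) : F (fun x => c⁻¹ * x * c) ⊤ ⊤ :=
  hF.conj_mem c trivial ⊤ ⊤ le_top le_top fun _ _ => trivial

theorem hom_normalizer_homImage (hf : F f X Y) (hA : A ≤ X) (hNA : N_S(A) ≤ X) :
    F f N_S(A) N_S(homImage f A) :=
  hF.hom_of_mapsTo hf hNA le_top fun _ hx =>
    (hF.isMulOn hf).mem_normalizer_homImage hA (hNA hx) hx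

theorem isFIso_sup (hg : F g D C) (hXM : X ⊔ M ≤ D) (hX : homImage g X = Y)
    (hM : homImage g M = B) : IsFIso F g (X ⊔ M) (Y ⊔ B) := by
  have h := hF.isFIso_homImage hg hXM
  rwa [(hF.isMulOn hg).homImage_sup (le_sup_left.trans hXM) (le_sup_right.trans hXM), hX, hM] at h

theorem isFIso_sup_of_eqOn (hg : F g D C) (hAW : A ⊔ W ≤ D) (hgf : EqOn g f A)
    (hgW : g '' W = W) : IsFIso F g (A ⊔ W) (homImage f A ⊔ W) :=
  hF.isFIso_sup hg hAW (homImage_congr hgf) (homImage_eq_of_image_eq hgW)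

theorem hom_sup_of_eqOn (hg : F g D C) (hAW : A ⊔ W ≤ D) (hgf : EqOn g f A)
    (hfAB : MapsTo f A B) (hgW : g '' W = W) : F g (A ⊔ W) (B ⊔ W) := by
  have h := hF.isFIso_sup_of_eqOn hg hAW hgf hgW
  refine hF.hom_of_mapsTo h.1 le_rfl le_top fun x hx => ?_
  have hgx : g x ∈ homImage f A ⊔ W := by
    rw [← SetLike.mem_coe, ← h.2]
    exact mem_image_of_mem g hx
  exact sup_le_sup_right (homImage_le_iff.mpr hfAB) W hgx

theorem isFusionSystem_nExt : IsFusionSystem N_S(W) (NExt F W) where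
  le_base _ _ _ h := ⟨h.1, h.2.1⟩
  mapsTo f X Y h := hF.mapsTo f X Y h.2.2.1
  injOn f X Y h := hF.injOn f X Y h.2.2.1
  map_mul' f X Y h := hF.map_mul' f X Y h.2.2.1
  of_eqOn := by
    rintro f f' X Y ⟨hX, hY, hf, g, hg, hgf, hgW⟩ hf'
    exact ⟨hX, hY, hF.of_eqOn f f' X Y hf hf', g, hg, hgf.trans hf'.symm, hgW⟩
  conj_mem := by
    intro c hc X Y hX hY hXY
    have hcW := conj_image_eq_of_mem_normalizer hc
    exact ⟨hX, hY, hF.conj_mem c trivial X Y le_top le_top hXY, _,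
      hF.hom_sup_of_eqOn (hF.conj_mem_top c) le_top (fun _ _ => rfl) hXY hcW, fun _ _ => rfl, hcW⟩
  comp_mem := by
    rintro f f' X Y Z ⟨hX, -, hf, g, hg, hgf, hgW⟩ ⟨-, hZ, hf', g', hg', hgf', hgW'⟩
    refine ⟨hX, hZ, hF.comp_mem f f' X Y Z hf hf', g' ∘ g, hF.comp_mem g g' _ _ _ hg hg',
      fun x hx => ?_, by rw [image_comp, hgW, hgW']⟩
    simp only [Function.comp_apply, hgf hx]
    exact hgf' (hF.mapsTo f X Y hf hx)
  restrict_mem := by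
    rintro f X Y X₀ Y₀ ⟨hX, hY, hf, g, hg, hgf, hgW⟩ hX₀ hY₀ hfX₀
    refine ⟨hX₀.trans hX, hY₀.trans hY, hF.restrict_mem f X Y X₀ Y₀ hf hX₀ hY₀ hfX₀,
      g, ?_, hgf.mono hX₀, hgW⟩
    exact hF.hom_sup_of_eqOn hg (sup_le_sup_right hX₀ W) (hgf.mono hX₀) hfX₀ hgW
  corestrict_mem := by
    rintro f X Y ⟨hX, hY, hf, g, hg, hgf, hgW⟩
    exact ⟨hX, (hF.homImage_le hf le_rfl).trans hY, hF.corestrict_mem f X Y hf, g,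
      (hF.isFIso_sup_of_eqOn hg le_rfl hgf hgW).1, hgf, hgW⟩
  inv_mem := by
    rintro f X Y ⟨hX, hY, hf, g, hg, hgf, hgW⟩
    obtain ⟨f', hf', hf'f⟩ := hF.inv_mem f X Y hf
    obtain ⟨g', hg', hg'g⟩ := hF.inv_mem g _ _ hg
    have hg'W : g' '' W = W := by
      nth_rewrite 1 [← hgW]
      rw [(show LeftInvOn g' g W from
        fun w hw => hg'g w (le_sup_right (α := Subgroup S) hw)).image_image]
    change F g' (homImage g (X ⊔ W)) (X ⊔ W) at hg'
    rw [homImage_eq_of_image_eq (hF.isFIso_sup_of_eqOn hg le_rfl hgf hgW).2] at hg'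
    refine ⟨f', ⟨(hF.homImage_le hf le_rfl).trans hY, hX, hf', g', hg', ?_, hg'W⟩, hf'f⟩
    change EqOn g' f' (homImage f X)
    rw [hF.coe_homImage hf le_rfl]
    rintro _ ⟨x, hx, rfl⟩
    rw [hf'f x hx, ← hgf hx]
    exact hg'g x (le_sup_left (α := Subgroup S) hx)

theorem nFus_eq : NFus F W = NExt F W := by
  funext f A B
  refine propext ⟨fun h => h _ hF.isFusionSystem_nExt (fun _ _ _ h => h.2.2.1) ?_, ?_⟩
  · exact fun f A B ⟨hA, hB, hf, g, hg, hgf, hgW⟩ => ⟨hA, hB, hf.1, g, hg.1, hgf, hgW⟩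
  · rintro ⟨hA, hB, hf, g, hg, hgf, hgW⟩ E hE - hΦ
    have hΦf : NPhi F W f A (homImage f A) :=
      ⟨hA, (hF.homImage_le hf le_rfl).trans hB, hF.isFIso_homImage hf le_rfl, g,
        hF.isFIso_sup_of_eqOn hg le_rfl hgf hgW, hgf, hgW⟩
    exact hE.hom_of_mapsTo (hΦ _ _ _ hΦf) le_rfl hB (hF.mapsTo f A B hf)

theorem isFusionSystem_nFus : IsFusionSystem N_S(W) (NFus F W) :=
  hF.nFus_eq ▸ hF.isFusionSystem_nExt

theorem hom_of_nFus (h : NFus F W f A B) : F f A B := by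
  rw [hF.nFus_eq] at h
  exact h.2.2.1

theorem le_normalizer_of_nFus (h : NFus F W f A B) : A ≤ N_S(W) ∧ B ≤ N_S(W) := by
  rw [hF.nFus_eq] at h
  exact ⟨h.1, h.2.1⟩

theorem image_eq_of_nFus (h : NFus F W f A B) (hWA : W ≤ A) : f '' W = W := by
  rw [hF.nFus_eq] at h
  obtain ⟨-, -, -, g, -, hgf, hgW⟩ := h
  rw [← (hgf.mono hWA).image_eq, hgW]

theorem isFIso_nFus (hA : A ≤ N_S(W)) (hB : B ≤ N_S(W)) (hf : IsFIso F f A B) (hWA : W ≤ A)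
    (hfW : f '' W = W) : IsFIso (NFus F W) f A B := by
  have hWB : W ≤ B := by
    rw [← SetLike.coe_subset_coe, ← hf.2, ← hfW]
    exact image_mono hWA
  refine ⟨?_, hf.2⟩
  rw [hF.nFus_eq]
  refine ⟨hA, hB, hf.1, f, ?_, fun _ _ => rfl, hfW⟩
  rw [sup_eq_left.mpr hWA, sup_eq_left.mpr hWB]
  exact hf.1

theorem exists_isFIso_nFus_sup (hf : IsFIso (NFus F W) f A B) :
    ∃ g, IsFIso (NFus F W) g (A ⊔ W) (B ⊔ W) ∧ EqOn g f A ∧ g '' W = W := by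
  have h := hf.1
  rw [hF.nFus_eq] at h
  obtain ⟨hA, hB, -, g, hg, hgf, hgW⟩ := h
  have hgiso := hF.isFIso_sup_of_eqOn hg le_rfl hgf hgW
  rw [homImage_eq_of_image_eq hf.2] at hgiso
  exact ⟨g, hF.isFIso_nFus (sup_le hA Subgroup.le_normalizer) (sup_le hB Subgroup.le_normalizer)
    hgiso le_sup_right hgW, hgf, hgW⟩

theorem normalInF_self : NormalInF N_S(W) (NFus F W) W :=
  ⟨Subgroup.le_normalizer, fun _ hc w hw => (Subgroup.mem_normalizer_iff''.mp hc w).mp hw,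
    fun _ _ _ => hF.exists_isFIso_nFus_sup⟩

/-- Conjugation-invariance is automatic for a subgroup containing `W` with the extension property,
since conjugation by an element of `N_S(W)` is an isomorphism of `N_F(W)`. -/
theorem normalInF_of_extend (hM : M ≤ N_S(W)) (hWM : W ≤ M)
    (hext : ∀ f X Y, IsFIso (NFus F W) f X Y →
      ∃ g, IsFIso (NFus F W) g (X ⊔ M) (Y ⊔ M) ∧ EqOn g f X ∧ g '' M = M) :
    NormalInF N_S(W) (NFus F W) M := by
  refine ⟨hM, fun c hc m hm => ?_, hext⟩
  have hcF := hF.conj_mem_top c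
  have hcM : homImage (fun x => c⁻¹ * x * c) M ≤ N_S(W) :=
    homImage_le_iff.mpr fun x hx => mul_mem (mul_mem (Subgroup.inv_mem _ hc) (hM hx)) hc
  have hciso := hF.isFIso_nFus hM hcM (hF.isFIso_homImage hcF le_top) hWM
    (conj_image_eq_of_mem_normalizer hc)
  obtain ⟨g, -, hgc, hgM⟩ := hext _ M _ hciso
  have hgm : g m = c⁻¹ * m * c := hgc hm
  rw [← hgm, ← SetLike.mem_coe, ← hgM]
  exact mem_image_of_mem g hm

theorem homImage_inf_normalizer_le (hf : F f D D') (hWD : W ≤ D) (hfW : f '' W = W) :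
    homImage f (D ⊓ N_S(W)) ≤ D' ⊓ N_S(W) :=
  homImage_le_iff.mpr fun _ hx => ⟨hF.mapsTo f D D' hf hx.1,
    homImage_eq_of_image_eq hfW ▸ (hF.isMulOn hf).mem_normalizer_homImage hWD hx.1 hx.2⟩

theorem homImage_inf_normalizer (hf : IsFIso F f D D') (hWD : W ≤ D) (hfW : f '' W = W) :
    homImage f (D ⊓ N_S(W)) = D' ⊓ N_S(W) := by
  obtain ⟨g, hg, hinv⟩ := hF.exists_inv hf
  have hgW : g '' W = W := by
    nth_rewrite 1 [← hfW]
    exact hinv.1.image_image' hWD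
  have hWD' : W ≤ D' := by
    rw [← SetLike.coe_subset_coe, ← hf.2, ← hfW]
    exact image_mono hWD
  refine le_antisymm (hF.homImage_inf_normalizer_le hf.1 hWD hfW) ?_
  calc D' ⊓ N_S(W) = homImage f (homImage g (D' ⊓ N_S(W))) :=
        (hF.homImage_homImage_of_leftInvOn hg.1 hinv.2 inf_le_left).symm
    _ ≤ homImage f (D ⊓ N_S(W)) :=
        homImage_mono (hF.homImage_inf_normalizer_le hg.1 hWD' hgW)

theorem nFus_transport (hβ : IsFIso F β N_S(W') D') (hβb : IsFIso F βb D' N_S(W'))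
    (hinv : InvOn βb β N_S(W') D') (hD' : D' ≤ N_S(W)) (hβW : β '' W' = W)
    (hf : NFus F W' f A B) :
    NFus F W (β ∘ f ∘ βb) (homImage β A) (homImage β B) := by
  rw [hF.nFus_eq] at hf ⊢
  obtain ⟨hA, hB, hf, g, hg, hgf, hgW⟩ := hf
  have hsup : ∀ {C : Subgroup S}, C ≤ N_S(W') →
      homImage β (C ⊔ W') = homImage β C ⊔ W := fun hC => by
    rw [(hF.isMulOn hβ.1).homImage_sup hC Subgroup.le_normalizer, homImage_eq_of_image_eq hβW]
  have hβbW : βb '' W = W' := by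
    rw [← hβW]
    exact hinv.1.image_image' Subgroup.le_normalizer
  refine ⟨(hF.homImage_le hβ.1 hA).trans hD', (hF.homImage_le hβ.1 hB).trans hD',
    hF.hom_transport hβ hβb hinv hf hA hB, β ∘ g ∘ βb, ?_, ?_, ?_⟩
  · rw [← hsup hA, ← hsup hB]
    exact hF.hom_transport hβ hβb hinv hg (sup_le hA Subgroup.le_normalizer)
      (sup_le hB Subgroup.le_normalizer)
  · rw [hF.coe_homImage hβ.1 hA]
    rintro _ ⟨a, ha, rfl⟩
    simp only [Function.comp_apply, hinv.1 (hA ha), hgf ha]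
  · rw [image_comp, image_comp, hβbW, hgW, hβW]

end IsFusionSystem

namespace NormalInF

variable {T : Subgroup S} {E : HomPred S} {e : S → S} {M N N' : Subgroup S}

theorem le_normalizer (hN : NormalInF T E N) : T ≤ N_S(N) :=
  forall_conj_mem_iff_le_normalizer.mp hN.2.1

theorem eq_of_isFIso (hN : NormalInF T E N) (he : IsFIso E e N N') : N' = N := by
  obtain ⟨g, -, hge, hgN⟩ := hN.2.2 e N N' he
  exact SetLike.coe_injective (he.2.symm.trans (hge.image_eq.symm.trans hgN))

theorem sup (hE : IsFusionSystem T E) (hM : NormalInF T E M) (hN : NormalInF T E N) :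
    NormalInF T E (M ⊔ N) := by
  refine ⟨sup_le hM.1 hN.1, forall_conj_mem_iff_le_normalizer.mpr ((le_inf hM.le_normalizer
    hN.le_normalizer).trans (Subgroup.normalizer_inf_normalizer_le_normalizer_sup M N)), ?_⟩
  intro f X Y hf
  obtain ⟨g, hg, hgf, hgM⟩ := hM.2.2 f X Y hf
  obtain ⟨g', hg', hg'g, hg'N⟩ := hN.2.2 g _ _ hg
  rw [sup_assoc, sup_assoc] at hg'
  have hMN : M ⊔ N ≤ X ⊔ (M ⊔ N) := le_sup_right
  refine ⟨g', hg', (hg'g.mono (le_sup_left : X ≤ X ⊔ M)).trans hgf, ?_⟩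
  have hg'M : g' '' M = M := (hg'g.mono (le_sup_right : M ≤ X ⊔ M)).image_eq.trans hgM
  rw [← hE.coe_homImage hg'.1 hMN, (hE.isMulOn hg'.1).homImage_sup (le_sup_left.trans hMN)
    (le_sup_right.trans hMN), homImage_eq_of_image_eq hg'M, homImage_eq_of_image_eq hg'N]

section Normalizer

variable {F : HomPred S} {Ω : Set (Subgroup S)} {star : Subgroup S → Subgroup S}
  (hΩ : IsStratification ⊤ F Ω star) (hF : IsFusionSystem ⊤ F) {τ β : S → S}
  {D W W' : Subgroup S}

include hF in
theorem image_eq (hN : NormalInF N_S(W) (NFus F W) N) (hWN : W ≤ N) (he : F e D N_S(W))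
    (hND : N ≤ D) (heW : e '' W = W) : e '' N = N := by
  rw [← hF.coe_homImage he hND, hN.eq_of_isFIso (hF.isFIso_nFus hN.1 (hF.homImage_le he hND)
    (hF.isFIso_homImage he hND) hWN heW)]

include hΩ hF in
theorem star_inf (hN : NormalInF N_S(W) (NFus F W) N) (hWN : W ≤ N) :
    NormalInF N_S(W) (NFus F W) (star N ⊓ N_S(W)) := by
  have hWN₁ : W ≤ star N ⊓ N_S(W) :=
    le_inf (hWN.trans (hΩ.le_star N le_top)) Subgroup.le_normalizer
  refine hF.normalInF_of_extend inf_le_right hWN₁ fun f X Y hf => ?_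
  obtain ⟨hXW, hYW⟩ := hF.le_normalizer_of_nFus hf.1
  obtain ⟨g, hg, hgf, hgN⟩ := hN.2.2 f X Y hf
  obtain ⟨h, hh, hhg⟩ := hΩ.extend_star g _ _ ⟨hF.hom_of_nFus hg.1, hg.2⟩
  have hXN : X ⊔ N ≤ star (X ⊔ N) := hΩ.le_star _ le_top
  have hNX : star N ≤ star (X ⊔ N) := hΩ.star_mono _ _ le_top le_top le_sup_right
  have hNY : star N ≤ star (Y ⊔ N) := hΩ.star_mono _ _ le_top le_top le_sup_right
  have hhf : EqOn h f X := (hhg.mono (le_sup_left : X ≤ X ⊔ N)).trans hgf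
  have hhN : h '' N = N := (hhg.mono (le_sup_right : N ≤ X ⊔ N)).image_eq.trans hgN
  have hWXN : W ≤ X ⊔ N := hWN.trans le_sup_right
  have hhW : h '' W = W := (hhg.mono hWXN).image_eq.trans (hF.image_eq_of_nFus hg.1 hWXN)
  have hstar : homImage h (star N) = star N :=
    hΩ.homImage_star hF hh hNX hNY (homImage_eq_of_image_eq hhN)
  have hN₁ : homImage h (star N ⊓ N_S(W)) = star N ⊓ N_S(W) := by
    calc homImage h (star N ⊓ N_S(W))
        = homImage h (star N ⊓ (star (X ⊔ N) ⊓ N_S(W))) := by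
          rw [← inf_assoc, inf_eq_left.mpr hNX]
      _ = star N ⊓ (star (Y ⊔ N) ⊓ N_S(W)) := by
          rw [hF.homImage_inf hh.1 hNX inf_le_left, hstar,
            hF.homImage_inf_normalizer hh (hWXN.trans hXN) hhW]
      _ = star N ⊓ N_S(W) := by rw [← inf_assoc, inf_eq_left.mpr hNY]
  have hN₁X : star N ⊓ N_S(W) ≤ star (X ⊔ N) := inf_le_left.trans hNX
  refine ⟨h, hF.isFIso_nFus (sup_le hXW inf_le_right) (sup_le hYW inf_le_right)
    (hF.isFIso_sup hh.1 (sup_le (le_sup_left.trans hXN) hN₁X)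
      ((homImage_congr hhf).trans (homImage_eq_of_image_eq hf.2)) hN₁)
    (hWN₁.trans le_sup_right) hhW, hhf, ?_⟩
  rw [← hF.coe_homImage hh.1 hN₁X, hN₁]

include hF in
/-- An isomorphism of `N_F(W')` is pushed into `N_F(W)` by `β`, extended there by normality of
`N`, and pulled back with `β⁻¹`. This needs `β(τ(N)) = N`, which holds because `β ∘ τ` is an
endomorphism of `N_S(W)` fixing `W`. -/
theorem transport (hN : NormalInF N_S(W) (NFus F W) N) (hWN : W ≤ N)
    (hτ : F τ N_S(W) N_S(W')) (hτW : τ '' W = W') (hβ : F β N_S(W') N_S(W))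
    (hβW : β '' W' = W) :
    NormalInF N_S(W') (NFus F W') (homImage τ N) := by
  have hτN : homImage τ N ≤ N_S(W') := hF.homImage_le hτ hN.1
  have hW'τN : W' ≤ homImage τ N := homImage_eq_of_image_eq hτW ▸ homImage_mono hWN
  have hβτN : β '' homImage τ N = N := by
    rw [hF.coe_homImage hτ hN.1, ← image_comp]
    exact hN.image_eq hF hWN (hF.comp_mem _ _ _ _ _ hτ hβ) hN.1 (by rw [image_comp, hτW, hβW])
  have hβ' := hF.isFIso_homImage hβ le_rfl
  obtain ⟨βb, hβb, hinv⟩ := hF.exists_inv hβ'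
  have hND' : N ≤ homImage β N_S(W') := homImage_eq_of_image_eq hβτN ▸ homImage_mono hτN
  have hβbN : βb '' N = homImage τ N := by
    conv_lhs => rw [← hβτN]
    exact hinv.1.image_image' hτN
  have hβbW : βb '' W = W' := by
    rw [← hβW]
    exact hinv.1.image_image' Subgroup.le_normalizer
  have hpull : ∀ {C : Subgroup S}, C ≤ N_S(W') →
      homImage βb (homImage β C ⊔ N) = C ⊔ homImage τ N := fun hC => by
    rw [(hF.isMulOn hβb.1).homImage_sup (homImage_mono hC) hND',
      hF.homImage_homImage_of_leftInvOn hβ'.1 hinv.1 hC, homImage_eq_of_image_eq hβbN]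
  refine hF.normalInF_of_extend hτN hW'τN fun f X Y hf => ?_
  obtain ⟨hX, hY⟩ := hF.le_normalizer_of_nFus hf.1
  have hf' : IsFIso (NFus F W) (β ∘ f ∘ βb) (homImage β X) (homImage β Y) :=
    ⟨hF.nFus_transport hβ' hβb hinv (hF.homImage_le hβ le_rfl) hβW hf.1,
      (hF.isFIso_transport hβ' hβb hinv ⟨hF.hom_of_nFus hf.1, hf.2⟩ hX hY).2⟩
  obtain ⟨g, hg, hgf, hgN⟩ := hN.2.2 _ _ _ hf'
  have hgW : g '' W = W := hF.image_eq_of_nFus hg.1 (hWN.trans le_sup_right)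
  have hG := hF.isFIso_transport hβb hβ' hinv.symm ⟨hF.hom_of_nFus hg.1, hg.2⟩
    (sup_le (homImage_mono hX) hND') (sup_le (homImage_mono hY) hND')
  rw [hpull hX, hpull hY] at hG
  refine ⟨βb ∘ g ∘ β, hF.isFIso_nFus (sup_le hX hτN) (sup_le hY hτN) hG
    (hW'τN.trans le_sup_right) (by rw [image_comp, image_comp, hβW, hgW, hβbW]), fun x hx => ?_,
    by rw [image_comp, image_comp, hβτN, hgN, hβbN]⟩
  have hfx : f x ∈ (Y : Set S) := hf.2 ▸ mem_image_of_mem f hx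
  simp only [Function.comp_apply, hgf (mem_homImage hx), hinv.1 (hX hx), hinv.1 (hY hfx)]

end Normalizer

end NormalInF

/-- A normal subgroup `N ⊇ W` of maximal dimension absorbs every normal `K`: `NK` is normal of
dimension at most that of `N`, forcing `K ≤ (NK)⋆ = N⋆`. So `N⋆ ∩ N_S(W)` is the largest. -/
theorem exists_isGreatest_normalInF {F : HomPred S} {Ω : Set (Subgroup S)}
    {star : Subgroup S → Subgroup S} (hΩ : IsStratification ⊤ F Ω star)
    (hF : IsFusionSystem ⊤ F) (W : Subgroup S) :
    ∃ M, IsGreatest {N | NormalInF N_S(W) (NFus F W) N} M := by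
  set 𝒩 := {N | NormalInF N_S(W) (NFus F W) N ∧ W ≤ N}
  have hbdd : BddAbove (dimStar Ω star '' 𝒩) :=
    let ⟨n, hn⟩ := hΩ.exists_dimEnd_le
    ⟨n, by rintro _ ⟨N, -, rfl⟩; exact hn _⟩
  obtain ⟨N, hN, hmax⟩ :
      ∃ N ∈ 𝒩, ∀ K ∈ 𝒩, dimStar Ω star K ≤ dimStar Ω star N := by
    have hW : W ∈ 𝒩 := ⟨hF.normalInF_self, le_rfl⟩
    obtain ⟨N, hN, hd⟩ := Nat.sSup_mem ⟨_, mem_image_of_mem _ hW⟩ hbdd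
    exact ⟨N, hN, fun K hK => hd ▸ le_csSup hbdd (mem_image_of_mem _ hK)⟩
  refine ⟨_, hN.1.star_inf hΩ hF hN.2, fun K hK => le_inf ?_ hK.1⟩
  have hNK : N ⊔ K ∈ 𝒩 := ⟨hN.1.sup hF.isFusionSystem_nFus hK, hN.2.trans le_sup_left⟩
  exact le_sup_right.trans (hΩ.le_star_of_dimStar_le le_sup_left (hmax _ hNK))

/-- For `K` normal in `N_F(W')`, `β(KW')` is normal in `N_F(W)`, hence lies
in `M`, and `τ ∘ β` maps `KW'` onto itself. -/
theorem isGreatest_normalInF_homImage {F : HomPred S} (hF : IsFusionSystem ⊤ F) {τ β : S → S}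
    {M W W' : Subgroup S} (hM : IsGreatest {N | NormalInF N_S(W) (NFus F W) N} M)
    (hτ : F τ N_S(W) N_S(W')) (hτW : τ '' W = W') (hβ : F β N_S(W') N_S(W))
    (hβW : β '' W' = W) :
    IsGreatest {N | NormalInF N_S(W') (NFus F W') N} (homImage τ M) := by
  refine ⟨hM.1.transport hF (hM.2 hF.normalInF_self) hτ hτW hβ hβW, fun K hK => ?_⟩
  have hKW' := hK.sup hF.isFusionSystem_nFus hF.normalInF_self
  have hβK : homImage β (K ⊔ W') ≤ M :=
    hM.2 (hKW'.transport hF le_sup_right hβ hβW hτ hτW)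
  have hτβ : (τ ∘ β) '' (K ⊔ W' : Subgroup S) = K ⊔ W' :=
    hKW'.image_eq hF le_sup_right (hF.comp_mem _ _ _ _ _ hβ hτ) hKW'.1
      (by rw [image_comp, hβW, hτW])
  calc K ≤ K ⊔ W' := le_sup_left
    _ = homImage τ (homImage β (K ⊔ W')) := by
      rw [hF.homImage_homImage hβ hKW'.1, homImage_eq_of_image_eq hτβ]
    _ ≤ homImage τ M := homImage_mono hβK

theorem normalizerInductive_top_iff {F : HomPred S} {Y : Subgroup S} :
    NormalizerInductive ⊤ F Y ↔
      ∀ X ∈ FConj F Y, ∃ φ, F φ N_S(X) N_S(Y) ∧ φ '' X = Y := by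
  simp only [NormalizerInductive, inf_top_eq]

theorem fullyNormalizedIn_of_forall_hom {F : HomPred S} {Ω : Set (Subgroup S)}
    {star : Subgroup S → Subgroup S} (hΩ : IsStratification ⊤ F Ω star)
    (hF : IsFusionSystem ⊤ F) {U : Subgroup S}
    (h : ∀ X ∈ FConj F U, ∃ ρ, F ρ N_S(X) N_S(U)) :
    FullyNormalizedIn ⊤ F Ω star U := fun X hX => by
  obtain ⟨ρ, hρ⟩ := h X hX
  simpa only [inf_top_eq] using hΩ.dimStar_le_of_hom hF hρ

/-- Lemma 2.13. For `V ∈ Γ` there exists an `F`-conjugate `U` of `V`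
such that both `U` and `Soc(N_F(U))`—the largest subgroup of `N_S(U)` that is normal in
`N_F(U)`—are fully normalized in `F`. -/
theorem exists_conjugate_with_socle_fullyNormalized
    {S : Type*} [Group S] (F : HomPred S)
    (Ω : Set (Subgroup S)) (star : Subgroup S → Subgroup S)
    (hF : IsFusionSystem ⊤ F) (hΩ : IsStratification ⊤ F Ω star)
    (Γ : Set (Subgroup S)) (hΓ : FClosed F Γ) (hind : GammaInductive ⊤ F Γ)
    (V : Subgroup S) (hV : V ∈ Γ) :
    ∃ U ∈ FConj F V, FullyNormalizedIn ⊤ F Ω star U ∧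
      ∃ M : Subgroup S,
        IsGreatest {N : Subgroup S | NormalInF (Subgroup.normalizer (U : Set S)) (NFus F U) N} M ∧
        FullyNormalizedIn ⊤ F Ω star M := by
  obtain ⟨Y, hVY, hY⟩ := hind V hV
  rw [normalizerInductive_top_iff] at hY
  obtain ⟨M, hM⟩ := exists_isGreatest_normalInF hΩ hF Y
  have hYM : Y ≤ M := hM.2 hF.normalInF_self
  obtain ⟨P, hMP, hP⟩ := hind M (hΓ.2.2 Y (hΓ.2.1 V hV Y hVY) M hYM)
  rw [normalizerInductive_top_iff] at hP
  obtain ⟨φ, hφ, hφM⟩ := hP M (hF.fConj_symm hMP)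
  have hNY := hM.1.le_normalizer
  have hYNM : Y ≤ Subgroup.normalizer (M : Set S) := hYM.trans Subgroup.le_normalizer
  have hτ := hF.hom_normalizer_homImage hφ hYNM hNY
  have hYU : homImage φ Y ∈ FConj F Y := ⟨φ, hF.isFIso_homImage hφ hYNM⟩
  obtain ⟨β, hβ, hβU⟩ := hY _ hYU
  refine ⟨homImage φ Y, hF.fConj_trans hVY hYU, ?_, P, ?_, ?_⟩
  · refine fullyNormalizedIn_of_forall_hom hΩ hF fun X hX => ?_
    obtain ⟨ρ, hρ, -⟩ := hY X (hF.fConj_trans hYU hX)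
    exact ⟨φ ∘ ρ, hF.comp_mem _ _ _ _ _ hρ hτ⟩
  · rw [← homImage_eq_of_image_eq hφM]
    exact isGreatest_normalInF_homImage hF hM hτ (hF.coe_homImage hφ hYNM).symm hβ hβU
  · exact fullyNormalizedIn_of_forall_hom hΩ hF fun Q hQ =>
      let ⟨σ, hσ, _⟩ := hP Q hQ
      ⟨σ, hσ⟩
end

section
/- Let p be a prime, let G be a countable, locally finite group of characteristic p, and let V be a normal p-subgroup of G. Let X be the set of all x ∈ C_G(V) such that [O_p(G), x] ≤ V, where [O_p(G), x] denotes the subgroup generated by the commutators q⁻¹x⁻¹qx with q ∈ O_p(G). Then X is a normal subgroup of G and X is a p-group. -/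
/-!
`X` is `C_G(V) ∩ C_G(O_p(G) mod V)`, an intersection of normal subgroups. For the `p`-group
property it suffices, since `G` is torsion, to show that an element `y ∈ X` of order `m` prime
to `p` is trivial. Each commutator `c = [q, y]` with `q ∈ O_p(G)` lies in `V` and so commutes
with `y`; hence `y⁻ⁿ q yⁿ = q cⁿ`, and `n = m` gives `cᵐ = 1`. As `c` lies in the `p`-group `V`,
`c = 1`. Thus `y` centralizes `O_p(G)`, so `y ∈ O_p(G)` by characteristic `p`, and `y = 1`.
-/

def LocallyFiniteGroup (G : Type*) [Group G] : Prop :=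
  ∀ s : Finset G, ((Subgroup.closure (s : Set G) : Subgroup G) : Set G).Finite

open Subgroup

theorem LocallyFiniteGroup.isOfFinOrder {G : Type*} [Group G] (hG : LocallyFiniteGroup G)
    (x : G) : IsOfFinOrder x := by
  have hfin := hG {x}
  rw [Finset.coe_singleton, ← zpowers_eq_closure] at hfin
  exact finite_zpowers.mp hfin

namespace IsPGroup

variable {p : ℕ} {G : Type*} [Group G]

theorem eq_one_of_mem_of_pow_eq_one {H : Subgroup G} (hH : IsPGroup p H) {n : ℕ}
    (hn : p.Coprime n) {g : G} (hg : g ∈ H) (hgn : g ^ n = 1) : g = 1 := by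
  have hcop := hH.orderOf_coprime hn ⟨g, hg⟩
  rw [orderOf_mk] at hcop
  exact orderOf_eq_one_iff.mp (hcop.eq_one_of_dvd (orderOf_dvd_of_pow_eq_one hgn))

theorem of_forall_coprime_orderOf_eq_one (hp : p.Prime) (htors : ∀ x : G, IsOfFinOrder x)
    (h : ∀ y : G, p.Coprime (orderOf y) → y = 1) : IsPGroup p G := by
  intro x
  have hx : orderOf x ≠ 0 := (htors x).orderOf_pos.ne'
  refine ⟨(orderOf x).factorization p, h _ ?_⟩
  rw [orderOf_pow_of_dvd (pow_ne_zero _ hp.ne_zero) (Nat.ordProj_dvd _ p)]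
  exact Nat.coprime_ordCompl hp hx

end IsPGroup

section Commutator

variable {G : Type*} [Group G]

theorem inv_pow_mul_mul_pow_of_commute {x q c : G} (hxc : Commute x c)
    (hq : x⁻¹ * q * x = q * c) (n : ℕ) : (x ^ n)⁻¹ * q * x ^ n = q * c ^ n := by
  induction n with
  | zero => simp
  | succ n ih =>
    calc (x ^ (n + 1))⁻¹ * q * x ^ (n + 1) = x⁻¹ * ((x ^ n)⁻¹ * q * x ^ n) * x := by group
      _ = x⁻¹ * q * x * (x⁻¹ * c ^ n * x) := by rw [ih]; group
      _ = q * c ^ (n + 1) := by rw [hq, (hxc.pow_right n).inv_mul_cancel, mul_assoc, ← pow_succ']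

theorem commutator_pow_eq_one_of_commute {x q : G} (hx : Commute x (q⁻¹ * x⁻¹ * q * x))
    {n : ℕ} (hxn : x ^ n = 1) : (q⁻¹ * x⁻¹ * q * x) ^ n = 1 := by
  have hconj := inv_pow_mul_mul_pow_of_commute (q := q) hx (by group) n
  rwa [hxn, inv_one, one_mul, mul_one, left_eq_mul] at hconj

end Commutator

namespace Subgroup

variable {G : Type*} [Group G]

def centralizerMod (V : Subgroup G) [V.Normal] (A : Subgroup G) : Subgroup G :=
  comap (QuotientGroup.mk' V) (centralizer (A.map (QuotientGroup.mk' V)))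

variable {V : Subgroup G} [V.Normal] {A : Subgroup G}

theorem mem_centralizerMod {x : G} :
    x ∈ centralizerMod V A ↔ ∀ q ∈ A, q⁻¹ * x⁻¹ * q * x ∈ V := by
  simp only [centralizerMod, mem_comap, mem_centralizer_iff, SetLike.mem_coe, mem_map,
    forall_exists_index, and_imp, forall_apply_eq_imp_iff₂]
  refine forall₂_congr fun q _ => ?_
  rw [← map_mul, ← map_mul, eq_comm, QuotientGroup.mk'_apply, QuotientGroup.mk'_apply,
    QuotientGroup.eq, mul_inv_rev, ← mul_assoc]

instance normal_centralizerMod [A.Normal] : (centralizerMod V A).Normal :=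
  have : (A.map (QuotientGroup.mk' V)).Normal :=
    Normal.map inferInstance _ (QuotientGroup.mk'_surjective V)
  normal_comap _

theorem eq_one_of_mem_centralizer_inf_centralizerMod {p : ℕ} (hVp : IsPGroup p V)
    (hAp : IsPGroup p A) (hA : centralizer (A : Set G) ≤ A) {y : G}
    (hy : y ∈ centralizer (V : Set G) ⊓ centralizerMod V A) (hyp : p.Coprime (orderOf y)) :
    y = 1 := by
  have hcomm : ∀ q ∈ A, q⁻¹ * y⁻¹ * q * y = 1 := fun q hq =>
    have hc := mem_centralizerMod.mp hy.2 q hq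
    hVp.eq_one_of_mem_of_pow_eq_one hyp hc <|
      commutator_pow_eq_one_of_commute (mem_centralizer_iff.mp hy.1 _ hc).symm
        (pow_orderOf_eq_one y)
  have hyA : y ∈ A := hA <| mem_centralizer_iff.mpr fun q hq =>
    calc q * y = y * q * (q⁻¹ * y⁻¹ * q * y) := by group
      _ = y * q := by rw [hcomm q hq, mul_one]
  exact hAp.eq_one_of_mem_of_pow_eq_one hyp hyA (pow_orderOf_eq_one y)

end Subgroup

theorem centralizer_commutator_le_is_normal_pSubgroup_general
    {G : Type*} [Group G] (p : ℕ) (hp : p.Prime)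
    (hlf : LocallyFiniteGroup G)
    (Op : Subgroup G)
    (hOp : IsGreatest {N : Subgroup G | N.Normal ∧ IsPGroup p ↥N} Op)
    (hchar : Subgroup.centralizer (Op : Set G) ≤ Op)
    (V : Subgroup G) (hVnormal : V.Normal) (hVp : IsPGroup p ↥V) :
    ∃ X : Subgroup G,
      (X : Set G) = {x : G | x ∈ Subgroup.centralizer (V : Set G) ∧
        Subgroup.closure {c : G | ∃ q ∈ Op, c = q⁻¹ * x⁻¹ * q * x} ≤ V} ∧
      X.Normal ∧ IsPGroup p ↥X := by
  obtain ⟨⟨hOpNormal, hOpp⟩, -⟩ := hOp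
  refine ⟨centralizer V ⊓ centralizerMod V Op, ?_, inferInstance, ?_⟩
  · ext x
    rw [SetLike.mem_coe, mem_inf, mem_centralizerMod, Set.mem_ofPred_eq, closure_le]
    exact and_congr_right' ⟨fun h _ ⟨q, hq, hc⟩ => hc ▸ h q hq, fun h q hq => h ⟨q, hq, rfl⟩⟩
  · refine IsPGroup.of_forall_coprime_orderOf_eq_one hp
      (fun x => Submonoid.isOfFinOrder_coe.mp (hlf.isOfFinOrder x)) fun y hy => ?_
    rw [← orderOf_coe] at hy
    exact Subtype.ext (eq_one_of_mem_centralizer_inf_centralizerMod hVp hOpp hchar y.2 hy)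

/-- Lemma 6.5(c). Let `G` be a countable, locally finite group of
characteristic `p` (with `Op = O_p(G)` its largest normal `p`-subgroup and
`C_G(Op) ≤ Op`), and let `V` be a normal `p`-subgroup of `G`.  Then the set
`X = {x ∈ C_G(V) | [O_p(G), x] ≤ V}` is a normal `p`-subgroup of `G`. -/
theorem centralizer_commutator_le_is_normal_pSubgroup
    {G : Type*} [Group G] (p : ℕ) (hp : p.Prime)
    [Countable G] (hlf : LocallyFiniteGroup G)
    (Op : Subgroup G)
    (hOp : IsGreatest {N : Subgroup G | N.Normal ∧ IsPGroup p ↥N} Op)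
    (hchar : Subgroup.centralizer (Op : Set G) ≤ Op)
    (V : Subgroup G) (hVnormal : V.Normal) (hVp : IsPGroup p ↥V) :
    ∃ X : Subgroup G,
      (X : Set G) = {x : G | x ∈ Subgroup.centralizer (V : Set G) ∧
        Subgroup.closure {c : G | ∃ q ∈ Op, c = q⁻¹ * x⁻¹ * q * x} ≤ V} ∧
      X.Normal ∧ IsPGroup p ↥X :=
  centralizer_commutator_le_is_normal_pSubgroup_general p hp hlf Op hOp hchar V hVnormal hVp
end
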